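/- Let Δ > 0, C > 0, k ≥ 1, and ε > 0, and let Z : ℕ⁺ → ℕ⁺ → ℝ satisfy |Z i j| < Δ/(ζ(3)·i³·j³) for all i, j ≥ 1. If (k+1)² ≥ e·Δ/(2·ζ(3)·ε) and (k+1)³ ≥ Δ/ε, then the complement of the k-truncation of Z (the matrix equal to Z at entries (i,j) with max(i,j) > k and 0 otherwise) has induced infinity norm less than ε. -/

import Mathlib

/-!
Row `i` of the complement is dominated entrywise by `(Δ / (ζ(3) i³)) · j⁻³`, so its sum is
below `Δ / i³`; for `i > k` this is at most `Δ / (k + 1)³ ≤ ε`, and rows `i ≥ k + 2` even stay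
below the fixed bound `Δ / (k + 2)³ < ε`. A row `i ≤ k` only sees the tail `j > k`, where
`j⁻³ ≤ 1 / ((j - 1) j (j + 1))` telescopes to `∑_{j > k} j⁻³ ≤ 1 / (2k(k + 1)) ≤ 1 / (k + 1)²`,
and the quadratic condition on `k` (with `e > 2`) makes `Δ / (ζ(3) (k + 1)²) < ε`.
Hence all rows but row `k + 1` share one bound below `ε`, and the supremum is below `ε`.
-/

/-- The Riemann zeta value ζ(3) = ∑_{n=1}^∞ 1/n³. -/
noncomputable def zeta3 : ℝ := ∑' n : ℕ+, 1 / (n : ℝ) ^ 3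

open Finset

lemma ciSup_lt_of_lt_of_forall_ne_le {ι α : Type*} [ConditionallyCompleteLinearOrder α]
    {f : ι → α} {a b : α} (i₀ : ι) (h₀ : f i₀ < a) (hb : b < a) (h : ∀ i ≠ i₀, f i ≤ b) :
    ⨆ i, f i < a := by
  have : Nonempty ι := ⟨i₀⟩
  refine (ciSup_le fun i => ?_).trans_lt (max_lt h₀ hb)
  by_cases hi : i = i₀
  · exact hi ▸ le_max_left _ _
  · exact (h i hi).trans (le_max_right _ _)

lemma one_div_add_one_pow_three_le {x : ℝ} (hx : 0 < x) :
    1 / (x + 1) ^ 3 ≤ 1 / (2 * x * (x + 1)) - 1 / (2 * (x + 1) * (x + 2)) := by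
  have htel : 1 / (2 * x * (x + 1)) - 1 / (2 * (x + 1) * (x + 2))
      = 1 / (x * (x + 1) * (x + 2)) := by
    field_simp
    ring
  rw [htel]
  gcongr
  nlinarith

lemma sum_range_one_div_add_pow_three_le {k : ℕ} (hk : 0 < k) (n : ℕ) :
    ∑ i ∈ range n, 1 / ((k : ℝ) + i + 1) ^ 3
      ≤ 1 / (2 * k * (k + 1)) - 1 / (2 * ((k : ℝ) + n) * (k + n + 1)) := by
  induction n with
  | zero => simp
  | succ n ih =>
    have hkn : (0 : ℝ) < k + n := by positivity
    rw [sum_range_succ, Nat.cast_succ, ← add_assoc, add_assoc _ 1 1, one_add_one_eq_two]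
    linarith [one_div_add_one_pow_three_le hkn]

lemma summable_one_div_pnat_pow_three : Summable fun n : ℕ+ => 1 / (n : ℝ) ^ 3 :=
  (Real.summable_one_div_nat_pow.mpr (by norm_num)).comp_injective PNat.coe_injective

lemma zeta3_pos : 0 < zeta3 :=
  summable_one_div_pnat_pow_three.tsum_pos (fun _ => by positivity) 1 (by norm_num)

lemma tsum_abs_lt_of_abs_lt_div_zeta3 {z : ℕ+ → ℝ} {c : ℝ}
    (h : ∀ j : ℕ+, |z j| < c / (zeta3 * (j : ℝ) ^ 3)) : ∑' j, |z j| < c := by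
  have hmaj : ∀ j : ℕ+, c / (zeta3 * (j : ℝ) ^ 3) = c / zeta3 * (1 / (j : ℝ) ^ 3) := fun j => by
    rw [div_mul_div_comm, mul_one]
  have hsum : ∑' j : ℕ+, c / zeta3 * (1 / (j : ℝ) ^ 3) = c := by
    rw [tsum_mul_left, ← zeta3, div_mul_cancel₀ _ zeta3_pos.ne']
  simp only [hmaj] at h
  rw [← hsum]
  exact Summable.tsum_lt_tsum (i := 1) (fun j => (h j).le) (h 1)
    (.of_nonneg_of_le (fun _ => abs_nonneg _) (fun j => (h j).le)
      (summable_one_div_pnat_pow_three.mul_left _))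
    (summable_one_div_pnat_pow_three.mul_left _)

lemma tsum_abs_le_of_abs_le_of_eq_zero {k : ℕ} (hk : 0 < k) {z : ℕ+ → ℝ} {c : ℝ}
    (hz : ∀ j : ℕ+, (j : ℕ) ≤ k → z j = 0) (h : ∀ j : ℕ+, |z j| ≤ c / (j : ℝ) ^ 3) :
    ∑' j, |z j| ≤ c / (2 * k * (k + 1)) := by
  have hc : 0 ≤ c := by simpa using (abs_nonneg _).trans (h 1)
  let g : ℕ → ℕ+ := fun i => (k + i).succPNat
  have hg : Function.Injective g := fun a b hab => by
    simpa [g] using congrArg PNat.val hab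
  have hsupp : Function.support (fun j => |z j|) ⊆ Set.range g := fun j hj => by
    have hkj : k < (j : ℕ) := by
      by_contra! hjk
      exact hj (by simp [hz j hjk])
    exact ⟨(j : ℕ) - k - 1, PNat.coe_injective (by simp [g]; omega)⟩
  rw [← hg.tsum_eq hsupp]
  refine Real.tsum_le_of_sum_range_le (fun _ => abs_nonneg _) fun n => ?_
  calc ∑ i ∈ range n, |z (g i)|
      ≤ ∑ i ∈ range n, c * (1 / ((k : ℝ) + i + 1) ^ 3) :=
        sum_le_sum fun i _ => (h (g i)).trans_eq (by rw [div_eq_mul_one_div]; simp [g])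
    _ = c * ∑ i ∈ range n, 1 / ((k : ℝ) + i + 1) ^ 3 := (mul_sum _ _ _).symm
    _ ≤ c * (1 / (2 * k * (k + 1))) := by
        gcongr
        refine (sum_range_one_div_add_pow_three_le hk n).trans (sub_le_self _ ?_)
        positivity
    _ = c / (2 * k * (k + 1)) := mul_one_div _ _

def truncCompl (k : ℕ) (Z : ℕ+ → ℕ+ → ℝ) (i j : ℕ+) : ℝ :=
  if (i : ℕ) ≤ k ∧ (j : ℕ) ≤ k then 0 else Z i j

section Rows

variable {Δ : ℝ} {k : ℕ} {Z : ℕ+ → ℕ+ → ℝ}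

lemma abs_truncCompl_le (i j : ℕ+) : |truncCompl k Z i j| ≤ |Z i j| := by
  unfold truncCompl
  split_ifs <;> simp

variable (hZ : ∀ i j : ℕ+, |Z i j| < Δ / (zeta3 * (i : ℝ) ^ 3 * (j : ℝ) ^ 3))
include hZ

lemma tsum_abs_truncCompl_lt (i : ℕ+) : ∑' j, |truncCompl k Z i j| < Δ / (i : ℝ) ^ 3 :=
  tsum_abs_lt_of_abs_lt_div_zeta3 fun j =>
    (abs_truncCompl_le i j).trans_lt ((hZ i j).trans_eq (by ring))

lemma tsum_abs_truncCompl_le_of_le (hΔ : 0 ≤ Δ) (hk : 0 < k) {i : ℕ+} (hi : (i : ℕ) ≤ k) :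
    ∑' j, |truncCompl k Z i j| ≤ Δ / zeta3 / (2 * k * (k + 1)) := by
  refine tsum_abs_le_of_abs_le_of_eq_zero hk (fun j hj => if_pos ⟨hi, hj⟩) fun j => ?_
  have hi3 : (1 : ℝ) ≤ (i : ℝ) ^ 3 := one_le_pow₀ (Nat.one_le_cast.mpr i.pos)
  have := zeta3_pos
  calc |truncCompl k Z i j| ≤ Δ / (zeta3 * (i : ℝ) ^ 3 * (j : ℝ) ^ 3) :=
        (abs_truncCompl_le i j).trans (hZ i j).le
    _ ≤ Δ / (zeta3 * 1 * (j : ℝ) ^ 3) := by gcongr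
    _ = Δ / zeta3 / (j : ℝ) ^ 3 := by ring

end Rows

theorem stmt_5_general (Δ ε : ℝ) (hΔ : 0 < Δ) (hε : 0 < ε)
    (k : ℕ) (hk : 1 ≤ k) (Z : ℕ+ → ℕ+ → ℝ)
    (hZ : ∀ i j : ℕ+, |Z i j| < Δ / (zeta3 * (i : ℝ) ^ 3 * (j : ℝ) ^ 3))
    (hk2 : ((k : ℝ) + 1) ^ 2 ≥ Real.exp 1 * Δ / (2 * zeta3 * ε))
    (hk3 : ((k : ℝ) + 1) ^ 3 ≥ Δ / ε) :
    (⨆ i : ℕ+, ∑' j : ℕ+, |if (i : ℕ) ≤ k ∧ (j : ℕ) ≤ k then (0 : ℝ) else Z i j|) < ε := by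
  show (⨆ i, ∑' j, |truncCompl k Z i j|) < ε
  have hcube : Δ / ((k : ℝ) + 1) ^ 3 ≤ ε := by
    rw [ge_iff_le, div_le_iff₀ hε] at hk3
    rw [div_le_iff₀ (by positivity)]
    linarith
  have hhead : Δ / zeta3 / (2 * k * (k + 1)) < ε := by
    have := zeta3_pos
    have hk1 : (1 : ℝ) ≤ k := by exact_mod_cast hk
    rw [ge_iff_le, div_le_iff₀ (by positivity)] at hk2
    have he : 2 * Δ < Real.exp 1 * Δ := mul_lt_mul_of_pos_right Real.exp_one_gt_two hΔ
    have hsq : zeta3 * ε * ((k : ℝ) + 1) ^ 2 ≤ zeta3 * ε * (2 * k * (k + 1)) := by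
      gcongr
      nlinarith
    rw [div_div, div_lt_iff₀ (by positivity)]
    linarith
  have hrow := tsum_abs_truncCompl_lt (k := k) hZ
  refine ciSup_lt_of_lt_of_forall_ne_le
    (b := max (Δ / ((k : ℝ) + 2) ^ 3) (Δ / zeta3 / (2 * k * (k + 1)))) k.succPNat
    ((hrow _).trans_le (by simpa using hcube)) (max_lt ?_ hhead) fun i hi => ?_
  · exact (div_lt_div_of_pos_left hΔ (by positivity) (by gcongr; norm_num)).trans_le hcube
  rcases le_or_gt (i : ℕ) k with hik | hik
  · exact (tsum_abs_truncCompl_le_of_le hZ hΔ.le hk hik).trans (le_max_right _ _)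
  · have hik2 : (k : ℝ) + 2 ≤ i := by
      have : (i : ℕ) ≠ k + 1 := fun h => hi (PNat.eq h)
      exact_mod_cast (show k + 2 ≤ (i : ℕ) by omega)
    exact (hrow i).le.trans ((div_le_div_of_nonneg_left hΔ.le (by positivity) (by gcongr)).trans
      (le_max_left _ _))

/-- If `|Z i j| < Δ/(ζ(3)·i³·j³)` for all `i, j ≥ 1`, `(k+1)² ≥ e·Δ/(2·ζ(3)·ε)` and
`(k+1)³ ≥ Δ/ε`, then the complement of the `k`-truncation of `Z` has induced infinity norm
less than `ε`. -/
theorem stmt_5 (Δ C ε : ℝ) (hΔ : 0 < Δ) (hC : 0 < C) (hε : 0 < ε)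
    (k : ℕ) (hk : 1 ≤ k) (Z : ℕ+ → ℕ+ → ℝ)
    (hZ : ∀ i j : ℕ+, |Z i j| < Δ / (zeta3 * (i : ℝ) ^ 3 * (j : ℝ) ^ 3))
    (hk2 : ((k : ℝ) + 1) ^ 2 ≥ Real.exp 1 * Δ / (2 * zeta3 * ε))
    (hk3 : ((k : ℝ) + 1) ^ 3 ≥ Δ / ε) :
    (⨆ i : ℕ+, ∑' j : ℕ+, |if (i : ℕ) ≤ k ∧ (j : ℕ) ≤ k then (0 : ℝ) else Z i j|) < ε :=
  stmt_5_general Δ ε hΔ hε k hk Z hZ hk2 hk3
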